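/- arXiv:1305.6597 — 6 statements merged into one kernel-verified Lean document; each statement's English description precedes it below -/
import Mathlib

section
/- Let q = 2^r, let t ≥ 3 be an integer which is not a power of 2, and let a be a nonzero element of F_q. Then the polynomial H(X,Y) = a·((X+1)^t + X^t + 1)/X + Y^{t−2} ∈ F_q[X,Y] is irreducible over the algebraic closure of F_q. (Here X divides (X+1)^t + X^t + 1 in F_q[X] since the characteristic is 2 and t is not a power of 2, so H is a well-defined polynomial.) -/
/-!
View `H` as the monic polynomial `Y ^ (t - 2) + a g` over the integrally closed ring `K[X]`, where
`X g = f := (X + 1) ^ t + X ^ t + 1`. By Gauss's lemma and the Kummer-type criterion for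
`Y ^ n - c` (which in characteristic two holds for every `n`, not only odd ones), `H` can only
be reducible if `a g` is a `p`-th power in `K[X]` for some prime `p`. But in characteristic two
`f (X + 1) = f X`, so `f` vanishes to the same order at `0` and at `1`, and therefore `g` vanishes
at `1` to order exactly one more than at `0`: these orders cannot both be multiples of `p`.
That `t` is not a power of two is what makes `f` nonzero: for `t = 2 ^ m * s` with `s` odd,
`f = ((X + 1) ^ s + X ^ s + 1) ^ 2 ^ m`, and the linear coefficient of the base is `s = 1`.
-/

open Polynomial

theorem Polynomial.rootMultiplicity_pow {R : Type*} [CommRing R] [IsDomain R] (p : R[X])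
    (n : ℕ) (x : R) : (p ^ n).rootMultiplicity x = n * p.rootMultiplicity x := by
  classical
  rw [← count_roots, roots_pow, Multiset.count_nsmul, count_roots]

section CharTwo

/-- As in `X_pow_sub_C_irreducible_of_odd`, whose oddness assumption only controls the sign
`(-1) ^ p` in the norm of a root; in characteristic two that sign is `1`. -/
theorem X_pow_sub_C_irreducible_of_charP_two {K : Type*} [Field K] [CharP K 2] {n : ℕ}
    (hn : n ≠ 0) {a : K} (ha : ∀ p : ℕ, p.Prime → p ∣ n → ∀ b : K, b ^ p ≠ a) :
    Irreducible (X ^ n - C a) := by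
  induction n using induction_on_primes generalizing K a with
  | zero => exact absurd rfl hn
  | one => simpa using irreducible_X_sub_C a
  | prime_mul p n hp IH =>
    rw [mul_comm]
    apply X_pow_mul_sub_C_irreducible
      (X_pow_sub_C_irreducible_of_prime hp (ha p hp (dvd_mul_right _ _)))
    intro E _ _ x hx
    have : CharP E 2 := charP_of_injective_algebraMap (algebraMap K E).injective 2
    have hint : IsIntegral K x := not_not.mp fun h ↦ by
      simpa only [degree_zero, degree_X_pow_sub_C hp.pos,
        WithBot.natCast_ne_bot] using congr_arg degree (hx.symm.trans (dif_neg h))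
    have : CharP (IntermediateField.adjoin K {x}) 2 :=
      charP_of_injective_algebraMap (algebraMap K _).injective 2
    refine IH (right_ne_zero_of_mul hn) fun q hq hqn b hb ↦ ?_
    apply ha q hq (dvd_mul_of_dvd_right hqn p) (Algebra.norm _ b)
    rw [← map_pow, hb, ← IntermediateField.adjoin.powerBasis_gen hint,
      Algebra.PowerBasis.norm_gen_eq_coeff_zero_minpoly]
    simp [IntermediateField.minpoly_gen, hx, hp.ne_zero.symm, CharTwo.neg_eq]

theorem X_pow_sub_C_irreducible_of_isIntegrallyClosed {R : Type*} [CommRing R] [IsDomain R]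
    [IsIntegrallyClosed R] [CharP R 2] {n : ℕ} (hn : n ≠ 0) {c : R}
    (hc : ∀ p : ℕ, p.Prime → p ∣ n → ∀ u : R, u ^ p ≠ c) :
    Irreducible (X ^ n - C c) := by
  let K := FractionRing R
  have : CharP K 2 := charP_of_injective_algebraMap (IsFractionRing.injective R K) 2
  rw [(monic_X_pow_sub_C c hn).irreducible_iff_irreducible_map_fraction_map (K := K),
    Polynomial.map_sub, Polynomial.map_pow, map_X, map_C]
  refine X_pow_sub_C_irreducible_of_charP_two hn fun p hp hpn b hb ↦ ?_
  have hb_int : IsIntegral R b :=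
    ⟨X ^ p - C c, monic_X_pow_sub_C c hp.ne_zero, by simp [hb]⟩
  obtain ⟨u, rfl⟩ := IsIntegrallyClosed.isIntegral_iff.mp hb_int
  exact hc p hp hpn u (IsFractionRing.injective R K (by rw [map_pow, hb]))

variable {R : Type*} [CommRing R] [CharP R 2]

theorem add_one_pow_add_X_pow_add_one_comp_X_add_one (t : ℕ) :
    ((X + 1) ^ t + X ^ t + 1 : R[X]).comp (X + 1) = (X + 1) ^ t + X ^ t + 1 := by
  have h : (X + 1 + 1 : R[X]) = X := by rw [add_assoc, CharTwo.add_self_eq_zero, add_zero]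
  rw [add_comp, add_comp, pow_comp, pow_comp, add_comp, X_comp, one_comp, h]
  ring

variable [IsDomain R]

theorem add_one_pow_add_X_pow_add_one_ne_zero {t : ℕ} (ht : ¬ ∃ k : ℕ, t = 2 ^ k) :
    ((X + 1) ^ t + X ^ t + 1 : R[X]) ≠ 0 := by
  rcases eq_or_ne t 0 with rfl | ht₀
  · simp [one_add_one_eq_two, CharTwo.two_eq_zero]
  obtain ⟨m, s, hs, rfl⟩ := Nat.exists_eq_two_pow_mul_odd ht₀
  have hs₁ : s ≠ 1 := by rintro rfl; exact ht ⟨m, mul_one _⟩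
  have hfrob : ((X + 1) ^ (2 ^ m * s) + X ^ (2 ^ m * s) + 1 : R[X]) =
      ((X + 1) ^ s + X ^ s + 1) ^ 2 ^ m := by
    rw [add_pow_char_pow, add_pow_char_pow, one_pow, ← pow_mul, ← pow_mul, mul_comm s]
  have hcoeff : ((X + 1) ^ s + X ^ s + 1 : R[X]).coeff 1 = 1 := by
    simp [coeff_X_add_one_pow, coeff_X_pow, coeff_one, Ne.symm hs₁,
      natCast_eq_one_of_odd_of_two_eq_zero hs CharTwo.two_eq_zero]
  rw [hfrob]
  exact pow_ne_zero _ fun h ↦ by simp [h] at hcoeff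

theorem rootMultiplicity_one_eq_rootMultiplicity_zero_add_one {t : ℕ}
    (ht : ¬ ∃ k : ℕ, t = 2 ^ k) {g : R[X]} (hg : X * g = (X + 1) ^ t + X ^ t + 1) :
    g.rootMultiplicity 1 = g.rootMultiplicity 0 + 1 := by
  have hXg : X * g ≠ 0 := hg ▸ add_one_pow_add_X_pow_add_one_ne_zero ht
  have hX₀ : (X : R[X]).rootMultiplicity 0 = 1 := by
    simpa using rootMultiplicity_X_sub_C_self (x := (0 : R))
  have hX₁ : (X : R[X]).rootMultiplicity 1 = 0 := rootMultiplicity_eq_zero (by simp)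
  have h : ((X + 1) ^ t + X ^ t + 1 : R[X]).rootMultiplicity 1 =
      ((X + 1) ^ t + X ^ t + 1 : R[X]).rootMultiplicity 0 := by
    rw [rootMultiplicity_eq_rootMultiplicity, map_one, add_one_pow_add_X_pow_add_one_comp_X_add_one]
  rw [← hg, rootMultiplicity_mul hXg, rootMultiplicity_mul hXg, hX₀, hX₁] at h
  omega

theorem pow_ne_C_mul_of_X_mul_eq_add_one_pow_add_X_pow_add_one {t : ℕ}
    (ht : ¬ ∃ k : ℕ, t = 2 ^ k) {g : R[X]} (hg : X * g = (X + 1) ^ t + X ^ t + 1)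
    {a : R} (ha : a ≠ 0) {p : ℕ} (hp : p ≠ 1) (u : R[X]) : u ^ p ≠ C a * g := by
  intro hu
  have hg₀ : g ≠ 0 := right_ne_zero_of_mul (hg ▸ add_one_pow_add_X_pow_add_one_ne_zero ht)
  have hmult (x : R) : p * u.rootMultiplicity x = g.rootMultiplicity x := by
    rw [← rootMultiplicity_pow, hu, rootMultiplicity_mul (mul_ne_zero (C_ne_zero.2 ha) hg₀),
      rootMultiplicity_C, zero_add]
  have h := rootMultiplicity_one_eq_rootMultiplicity_zero_add_one ht hg
  rw [← hmult, ← hmult] at h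
  exact hp (Nat.dvd_one.1 ((Nat.dvd_add_right (dvd_mul_right p _)).1 (h ▸ dvd_mul_right p _)))

end CharTwo

noncomputable def MvPolynomial.finTwoAlgEquiv (K : Type*) [CommRing K] :
    MvPolynomial (Fin 2) K ≃ₐ[K] K[X][X] :=
  (MvPolynomial.renameEquiv K (Equiv.swap 0 1)).trans <| (MvPolynomial.finSuccEquiv K 1).trans <|
    Polynomial.mapAlgEquiv (MvPolynomial.uniqueAlgEquiv K (Fin 1))

namespace MvPolynomial

variable {K : Type*} [CommRing K]

@[simp]
theorem finTwoAlgEquiv_X_zero : finTwoAlgEquiv K (X 0) = Polynomial.C Polynomial.X := by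
  rw [finTwoAlgEquiv, AlgEquiv.trans_apply, renameEquiv_apply, rename_X, Equiv.swap_apply_left,
    ← Fin.succ_zero_eq_one, AlgEquiv.trans_apply, finSuccEquiv_X_succ]
  simp

@[simp]
theorem finTwoAlgEquiv_X_one : finTwoAlgEquiv K (X 1) = Polynomial.X := by
  simp [finTwoAlgEquiv, finSuccEquiv_X_zero]

end MvPolynomial

theorem irreducible_C_mul_add_X_one_pow {K : Type*} [Field K] [CharP K 2] {t : ℕ} (ht : 3 ≤ t)
    (htn : ¬ ∃ k : ℕ, t = 2 ^ k) {a : K} (ha : a ≠ 0) {P : MvPolynomial (Fin 2) K}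
    (hP : MvPolynomial.X 0 * P = (MvPolynomial.X 0 + 1) ^ t + MvPolynomial.X 0 ^ t + 1) :
    Irreducible (MvPolynomial.C a * P + MvPolynomial.X 1 ^ (t - 2)) := by
  let e := MvPolynomial.finTwoAlgEquiv K
  have hP' : C X * e P = C ((X + 1) ^ t + X ^ t + 1) := by
    have h := congrArg e hP
    rw [map_mul, map_add, map_add, map_pow, map_pow, map_add, map_one,
      MvPolynomial.finTwoAlgEquiv_X_zero] at h
    rw [h]
    simp
  obtain ⟨g, hPg⟩ : ∃ g, e P = C g := ⟨_, eq_C_of_natDegree_eq_zero (by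
    simpa only [natDegree_C_mul X_ne_zero, natDegree_C] using congrArg natDegree hP')⟩
  rw [hPg, ← C_mul, C_inj] at hP'
  have he : e (MvPolynomial.C a * P + MvPolynomial.X 1 ^ (t - 2)) = X ^ (t - 2) - C (C a * g) := by
    rw [map_add, map_mul, map_pow, hPg, MvPolynomial.finTwoAlgEquiv_X_one,
      ← MvPolynomial.algebraMap_eq, AlgEquiv.commutes, CharTwo.sub_eq_add, add_comm, C_mul,
      Polynomial.algebraMap_apply, Polynomial.algebraMap_eq]
  refine (MulEquiv.irreducible_iff e).1 ?_
  rw [he]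
  exact X_pow_sub_C_irreducible_of_isIntegrallyClosed (by omega) fun p hp _ ↦
    pow_ne_C_mul_of_X_mul_eq_add_one_pow_add_X_pow_add_one htn hP' ha hp.ne_one

open MvPolynomial

theorem stmt_4_general (r : ℕ) (F : Type*) [Field F] [Fintype F]
    (hcard : Fintype.card F = 2 ^ r) (t : ℕ) (ht : 3 ≤ t)
    (htn : ¬ ∃ k : ℕ, t = 2 ^ k) (a : F) (ha : a ≠ 0)
    (P : MvPolynomial (Fin 2) F)
    (hP : MvPolynomial.X 0 * P = (MvPolynomial.X 0 + 1) ^ t + (MvPolynomial.X 0) ^ t + 1) :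
    Irreducible (MvPolynomial.map (algebraMap F (AlgebraicClosure F))
      (MvPolynomial.C a * P + (MvPolynomial.X 1) ^ (t - 2))) := by
  have : CharP F 2 := charP_of_card_eq_prime_pow hcard
  have : CharP (AlgebraicClosure F) 2 :=
    charP_of_injective_algebraMap (algebraMap F _).injective 2
  have hP' := congrArg (MvPolynomial.map (algebraMap F (AlgebraicClosure F))) hP
  simp only [map_mul, map_add, map_pow, MvPolynomial.map_X, map_one] at hP'
  simpa using irreducible_C_mul_add_X_one_pow ht htn (by simpa using ha) hP'

theorem stmt_4 (r : ℕ) (hr : 0 < r) (F : Type*) [Field F] [Fintype F]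
    (hcard : Fintype.card F = 2 ^ r) (t : ℕ) (ht : 3 ≤ t)
    (htn : ¬ ∃ k : ℕ, t = 2 ^ k) (a : F) (ha : a ≠ 0)
    (P : MvPolynomial (Fin 2) F)
    (hP : MvPolynomial.X 0 * P = (MvPolynomial.X 0 + 1) ^ t + (MvPolynomial.X 0) ^ t + 1) :
    Irreducible (MvPolynomial.map (algebraMap F (AlgebraicClosure F))
      (MvPolynomial.C a * P + (MvPolynomial.X 1) ^ (t - 2))) :=
  stmt_4_general r F hcard t ht htn a ha P hP
end

section
/- Let t be a positive integer which is not a power of 2, and write t = 2^m · o with o odd (so o ≥ 3). Then in F_2[X], the multiplicity of 0 as a root of the polynomial ((X+1)^t + X^t + 1)/X equals 2^m − 1, and the multiplicity of 1 as a root of this polynomial equals 2^m. -/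
/-!
Write `t = 2^m o`. By the Frobenius endomorphism, `(X+1)^t + X^t + 1 = F^(2^m)` with
`F = (X+1)^o + X^o + 1`. Both `0` and `1` are roots of `F`, and they are simple: since `o` is
odd, `F' = (X+1)^(o-1) + X^(o-1)`, which takes the value `1` at both points once `o ≥ 3`.
Hence `X Q` vanishes to order exactly `2^m` at `0` and at `1`, and the factor `X` accounts for
one of the `2^m` at `0`.
-/

open Polynomial

namespace Polynomial

theorem rootMultiplicity_pow_s6 {R : Type*} [CommRing R] [IsDomain R] (p : R[X]) (a : R) (n : ℕ) :
    (p ^ n).rootMultiplicity a = n * p.rootMultiplicity a := by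
  classical
  simp only [← count_roots, roots_pow, Multiset.count_nsmul]

theorem rootMultiplicity_eq_one_of_eval_derivative_ne_zero {R : Type*} [CommRing R]
    {p : R[X]} {a : R} (hroot : p.IsRoot a) (hder : (derivative p).eval a ≠ 0) :
    p.rootMultiplicity a = 1 := by
  have hp : p ≠ 0 := by
    rintro rfl
    simp at hder
  refine le_antisymm (not_lt.1 fun h => hder ?_) ((rootMultiplicity_pos hp).2 hroot)
  exact ((one_lt_rootMultiplicity_iff_isRoot hp).1 h).2

section CharTwo

variable {R : Type*} [CommRing R] [CharP R 2]

theorem add_one_pow_add_X_pow_add_one_pow_two_pow (o m : ℕ) :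
    ((X + 1) ^ o + X ^ o + 1 : R[X]) ^ 2 ^ m = (X + 1) ^ (2 ^ m * o) + X ^ (2 ^ m * o) + 1 := by
  rw [add_pow_char_pow, add_pow_char_pow, one_pow, ← pow_mul, ← pow_mul, mul_comm o]

theorem derivative_add_one_pow_add_X_pow_add_one {o : ℕ} (ho : Odd o) :
    derivative ((X + 1) ^ o + X ^ o + 1 : R[X]) = (X + 1) ^ (o - 1) + X ^ (o - 1) := by
  simp [derivative_pow, natCast_eq_one_of_odd_of_two_eq_zero ho CharTwo.two_eq_zero]

theorem rootMultiplicity_add_one_pow_add_X_pow_add_one {o : ℕ} (ho : Odd o) (ho1 : o ≠ 1)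
    {a : R} (ha : a = 0 ∨ a = 1) :
    ((X + 1) ^ o + X ^ o + 1 : R[X]).rootMultiplicity a = 1 := by
  have ho0 : o ≠ 0 := ho.pos.ne'
  have ho' : o - 1 ≠ 0 := by omega
  have : Nontrivial R := CharP.nontrivial_of_char_ne_one (v := 2) (by decide)
  apply rootMultiplicity_eq_one_of_eval_derivative_ne_zero
  · rcases ha with rfl | rfl <;> simp [zero_pow ho0, CharTwo.add_self_eq_zero]
  · rw [derivative_add_one_pow_add_X_pow_add_one ho]
    rcases ha with rfl | rfl <;> simp [zero_pow ho', CharTwo.add_self_eq_zero]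

end CharTwo

end Polynomial

theorem stmt_6_general (t : ℕ) (htn : ¬ ∃ k : ℕ, t = 2 ^ k)
    (m o : ℕ) (ho : Odd o) (hto : t = 2 ^ m * o)
    (Q : Polynomial (ZMod 2))
    (hQ : Polynomial.X * Q = (Polynomial.X + 1) ^ t + Polynomial.X ^ t + 1) :
    Q.rootMultiplicity 0 = 2 ^ m - 1 ∧ Q.rootMultiplicity 1 = 2 ^ m := by
  have ho1 : o ≠ 1 := by
    rintro rfl
    exact htn ⟨m, by rw [hto, mul_one]⟩
  set F : (ZMod 2)[X] := (X + 1) ^ o + X ^ o + 1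
  have hF : ∀ a : ZMod 2, a = 0 ∨ a = 1 → F.rootMultiplicity a = 1 :=
    fun _ => rootMultiplicity_add_one_pow_add_X_pow_add_one ho ho1
  have hXQ : X * Q = F ^ 2 ^ m := by
    rw [hQ, hto, add_one_pow_add_X_pow_add_one_pow_two_pow]
  have hXQ0 : X * Q ≠ 0 := by
    rw [hXQ]
    refine pow_ne_zero _ fun hF0 => ?_
    simpa [hF0] using hF 0 (.inl rfl)
  have key : ∀ a : ZMod 2, a = 0 ∨ a = 1 →
      X.rootMultiplicity a + Q.rootMultiplicity a = 2 ^ m := by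
    intro a ha
    rw [← rootMultiplicity_mul hXQ0, hXQ, rootMultiplicity_pow_s6, hF a ha, mul_one]
  have hX0 : (X : (ZMod 2)[X]).rootMultiplicity 0 = 1 := by
    simpa using rootMultiplicity_X_sub_C_self (x := (0 : ZMod 2))
  have hX1 : (X : (ZMod 2)[X]).rootMultiplicity 1 = 0 := rootMultiplicity_eq_zero (by simp)
  have h0 := key 0 (.inl rfl)
  have h1 := key 1 (.inr rfl)
  omega

theorem stmt_6 (t : ℕ) (ht : 0 < t) (htn : ¬ ∃ k : ℕ, t = 2 ^ k)
    (m o : ℕ) (ho : Odd o) (hto : t = 2 ^ m * o)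
    (Q : Polynomial (ZMod 2))
    (hQ : Polynomial.X * Q = (Polynomial.X + 1) ^ t + Polynomial.X ^ t + 1) :
    Q.rootMultiplicity 0 = 2 ^ m - 1 ∧ Q.rootMultiplicity 1 = 2 ^ m :=
  stmt_6_general t htn m o ho hto Q hQ
end

section
/- Let q = 2^r, let t ≥ 3 be an integer which is not a power of 2, and let a be a nonzero element of F_q. Suppose the function c ↦ a·c^t is planar on F_q. Let H(X,Y) = a·((X+1)^t + X^t + 1)/X + Y^{t−2} ∈ F_q[X,Y]. Then every pair (c,b) ∈ F_q × F_q with H(c,b) = 0 satisfies c = 0 or b = 0, and consequently the number of zeros of H in F_q × F_q is at most 2(t−2). -/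
/-!
Put `β = b⁻¹`. Since `c ↦ c * P(c)` is `(c + 1)^t + c^t + 1` and we are in characteristic 2, a
zero `(c, b)` of `H` with `b ≠ 0` makes the difference map `x ↦ f (x + β) + f x + β x` of
`f x = a x^t` take the same value at `β c` and at `0`, so planarity forces `c = 0`.
Hence all zeros lie on the two axes: those on `c = 0` are roots of `Y^(t-2) + a P(0)`, and those
on `b = 0` are roots of `P(X)`, which has degree at most `t - 2` and is nonzero because a `t`
that is not a power of 2 has an odd binomial coefficient `t.choose k` with `0 < k < t` (Lucas).
-/

/-- A function `f : F → F` on a field of characteristic 2 is *planar* if for every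
nonzero `b`, the map `c ↦ f(c+b) + f(c) + b*c` is a bijection. -/
def IsPlanar {F : Type*} [Field F] (f : F → F) : Prop :=
  ∀ b : F, b ≠ 0 → Function.Bijective (fun c : F => f (c + b) + f c + b * c)

open Polynomial

theorem Nat.exists_odd_choose_of_ne_two_pow {t : ℕ} (ht : t ≠ 0) (htn : ¬ ∃ k, t = 2 ^ k) :
    ∃ k, 0 < k ∧ k < t ∧ Odd (t.choose k) := by
  induction t using Nat.strong_induction_on with
  | _ t ih =>
  obtain ⟨s, rfl | rfl⟩ := Nat.even_or_odd' t
  · have hs : ¬ ∃ k, s = 2 ^ k := fun ⟨k, hk⟩ => htn ⟨k + 1, by rw [hk, pow_succ, mul_comm]⟩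
    obtain ⟨k, hk0, hks, hodd⟩ := ih s (by omega) (by omega) hs
    refine ⟨2 * k, by omega, by omega, ?_⟩
    have hlucas :=
      Choose.choose_modEq_choose_mod_mul_choose_div_nat (p := 2) (n := 2 * s) (k := 2 * k)
    simp only [Nat.mul_mod_right, Nat.choose_zero_right, one_mul,
      Nat.mul_div_cancel_left _ two_pos] at hlucas
    rw [Nat.odd_iff] at hodd ⊢
    exact Eq.trans hlucas hodd
  · have hs : s ≠ 0 := by rintro rfl; exact htn ⟨0, rfl⟩
    exact ⟨1, one_pos, by omega, by simp⟩

theorem charP_two_of_card_eq_two_pow {F : Type*} [Field F] [Fintype F] {r : ℕ}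
    (hcard : Fintype.card F = 2 ^ r) : CharP F 2 := by
  have h := FiniteField.cast_card_eq_zero F
  rw [hcard, Nat.cast_pow, Nat.cast_ofNat] at h
  exact CharTwo.of_one_ne_zero_of_two_eq_zero one_ne_zero (eq_zero_of_pow_eq_zero h)

-- `H = a * (numeratorPoly t).divX + Y^(t-2)`
noncomputable def numeratorPoly (R : Type*) [Semiring R] (t : ℕ) : R[X] := (X + 1) ^ t + X ^ t + 1

section numeratorPoly

variable {R : Type*} [Semiring R] {t : ℕ}

theorem coeff_numeratorPoly (t k : ℕ) :
    (numeratorPoly R t).coeff k =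
      t.choose k + (if k = t then 1 else 0) + (if k = 0 then 1 else 0) := by
  simp [numeratorPoly, coeff_X_add_one_pow, coeff_X_pow, coeff_one, eq_comm]

variable [CharP R 2]

theorem coeff_numeratorPoly_zero (ht : t ≠ 0) : (numeratorPoly R t).coeff 0 = 0 := by
  simp [coeff_numeratorPoly, Ne.symm ht, one_add_one_eq_two, CharTwo.two_eq_zero]

theorem natDegree_numeratorPoly_le (ht : t ≠ 0) : (numeratorPoly R t).natDegree ≤ t - 1 := by
  refine natDegree_le_iff_coeff_eq_zero.mpr fun k hk => ?_
  rcases eq_or_lt_of_le (show t ≤ k by omega) with rfl | hlt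
  · simp [coeff_numeratorPoly, ht, one_add_one_eq_two, CharTwo.two_eq_zero]
  · simp [coeff_numeratorPoly, Nat.choose_eq_zero_of_lt hlt, hlt.ne', show k ≠ 0 by omega]

theorem numeratorPoly_ne_zero [Nontrivial R] (ht : t ≠ 0) (htn : ¬ ∃ k, t = 2 ^ k) :
    numeratorPoly R t ≠ 0 := by
  obtain ⟨k, hk0, hkt, hodd⟩ := Nat.exists_odd_choose_of_ne_two_pow ht htn
  intro h
  have hk := congrArg (coeff · k) h
  simp [coeff_numeratorPoly, hkt.ne, hk0.ne', CharTwo.natCast_eq_ite,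
    Nat.not_even_iff_odd.mpr hodd] at hk

theorem X_mul_divX_numeratorPoly (ht : t ≠ 0) :
    X * (numeratorPoly R t).divX = numeratorPoly R t := by
  simpa [coeff_numeratorPoly_zero ht] using X_mul_divX_add (numeratorPoly R t)

theorem natDegree_divX_numeratorPoly_le (ht : t ≠ 0) :
    (numeratorPoly R t).divX.natDegree ≤ t - 2 := by
  have := natDegree_numeratorPoly_le (R := R) ht
  rw [natDegree_divX_eq_natDegree_tsub_one]
  omega

theorem divX_numeratorPoly_ne_zero [Nontrivial R] (ht : t ≠ 0) (htn : ¬ ∃ k, t = 2 ^ k) :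
    (numeratorPoly R t).divX ≠ 0 := fun h =>
  numeratorPoly_ne_zero (R := R) ht htn (by rw [← X_mul_divX_numeratorPoly ht, h, mul_zero])

end numeratorPoly

theorem mul_eval_divX_numeratorPoly {R : Type*} [CommSemiring R] [CharP R 2] {t : ℕ}
    (ht : t ≠ 0) (c : R) : c * (numeratorPoly R t).divX.eval c = (c + 1) ^ t + c ^ t + 1 := by
  simpa [numeratorPoly] using congrArg (eval c) (X_mul_divX_numeratorPoly (R := R) ht)

theorem eq_zero_of_isPlanar_mul_pow {F : Type*} [Field F] [CharP F 2] {t : ℕ} (ht : 2 ≤ t)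
    {a b c : F} (hplanar : IsPlanar fun x : F => a * x ^ t) (hb : b ≠ 0)
    (h : a * ((c + 1) ^ t + c ^ t + 1) = c * b ^ (t - 2)) : c = 0 := by
  obtain ⟨s, rfl⟩ := Nat.exists_eq_add_of_le' ht
  rw [Nat.add_sub_cancel] at h
  set β := b⁻¹
  have hβ : β ≠ 0 := inv_ne_zero hb
  have hβb : β ^ s * b ^ s = 1 := by rw [← mul_pow, inv_mul_cancel₀ hb, one_pow]
  have hcollide : a * (β * c + β) ^ (s + 2) + a * (β * c) ^ (s + 2) + β * (β * c) =
      a * (0 + β) ^ (s + 2) + a * 0 ^ (s + 2) + β * 0 := by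
    rw [show β * c + β = β * (c + 1) by ring, mul_pow, mul_pow]
    linear_combination β ^ (s + 2) * h + β ^ 2 * c * hβb +
      (β ^ 2 * c - a * β ^ (s + 2)) * (CharTwo.two_eq_zero : (2 : F) = 0)
  simpa [hβ] using (hplanar β hβ).injective hcollide

theorem MvPolynomial.eval_eq_eval_divX_of_X_mul_eq {σ R : Type*} [CommRing R] [IsDomain R]
    (i : σ) {P : MvPolynomial σ R} {g : R[X]} (hg : g.coeff 0 = 0)
    (hP : X i * P = Polynomial.aeval (X i) g) (x : σ → R) :
    eval x P = g.divX.eval (x i) := by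
  have hPg : P = Polynomial.aeval (X i) g.divX := by
    refine mul_left_cancel₀ (X_ne_zero i) ?_
    rw [hP]
    conv_lhs => rw [← X_mul_divX_add g, hg, map_zero, add_zero, map_mul, Polynomial.aeval_X]
  simpa [hPg] using (Polynomial.aeval_algHom_apply (aeval x) (X i) g.divX).symm

theorem card_filter_le_of_mem_axes {R : Type*} [CommRing R] [IsDomain R] [Fintype R]
    [DecidableEq R] (Z : R × R → Prop) [DecidablePred Z] {f g : R[X]} (hf : f ≠ 0) (hg : g ≠ 0)
    (hZ : ∀ c b, Z (c, b) → (c = 0 ∧ f.IsRoot b) ∨ (b = 0 ∧ g.IsRoot c)) :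
    (Finset.univ.filter Z).card ≤ f.natDegree + g.natDegree := by
  have hsub : Finset.univ.filter Z ⊆
      f.roots.toFinset.image (Prod.mk 0) ∪ g.roots.toFinset.image (·, 0) := by
    rintro ⟨c, b⟩ hcb
    rcases hZ c b (Finset.mem_filter.mp hcb).2 with ⟨rfl, hb⟩ | ⟨rfl, hc⟩
    · simp [hf, hb.eq_zero]
    · simp [hg, hc.eq_zero]
  calc (Finset.univ.filter Z).card
      ≤ (f.roots.toFinset.image (Prod.mk 0)).card + (g.roots.toFinset.image (·, 0)).card :=
        (Finset.card_le_card hsub).trans (Finset.card_union_le _ _)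
    _ ≤ f.natDegree + g.natDegree := by
        gcongr
        · exact Finset.card_image_le.trans ((Multiset.toFinset_card_le _).trans (card_roots' f))
        · exact Finset.card_image_le.trans ((Multiset.toFinset_card_le _).trans (card_roots' g))

theorem stmt_9 (r : ℕ) (F : Type*) [Field F] [Fintype F] [DecidableEq F]
    (hcard : Fintype.card F = 2 ^ r) (t : ℕ) (ht : 3 ≤ t)
    (htn : ¬ ∃ k : ℕ, t = 2 ^ k) (a : F) (ha : a ≠ 0)
    (hplanar : IsPlanar (fun c : F => a * c ^ t))
    (P : MvPolynomial (Fin 2) F)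
    (hP : MvPolynomial.X 0 * P = (MvPolynomial.X 0 + 1) ^ t + (MvPolynomial.X 0) ^ t + 1)
    (H : MvPolynomial (Fin 2) F)
    (hH : H = MvPolynomial.C a * P + (MvPolynomial.X 1) ^ (t - 2)) :
    (∀ c b : F, MvPolynomial.eval ![c, b] H = 0 → c = 0 ∨ b = 0) ∧
    (Finset.univ.filter
        (fun cb : F × F => MvPolynomial.eval ![cb.1, cb.2] H = 0)).card ≤ 2 * (t - 2) := by
  have : CharP F 2 := charP_two_of_card_eq_two_pow hcard
  have ht0 : t ≠ 0 := by omega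
  set p := (numeratorPoly F t).divX
  have hPp : ∀ c b : F, MvPolynomial.eval ![c, b] P = p.eval c := fun c b =>
    MvPolynomial.eval_eq_eval_divX_of_X_mul_eq 0 (coeff_numeratorPoly_zero ht0)
      (by simpa [numeratorPoly] using hP) _
  have hHp : ∀ c b : F, MvPolynomial.eval ![c, b] H = a * p.eval c + b ^ (t - 2) := by
    simp [hH, hPp]
  have haxes : ∀ c b : F, MvPolynomial.eval ![c, b] H = 0 → c = 0 ∨ b = 0 := by
    intro c b h
    by_contra! hcb
    refine hcb.1 (eq_zero_of_isPlanar_mul_pow (by omega) hplanar hcb.2 ?_)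
    rw [hHp, CharTwo.add_eq_zero] at h
    rw [← mul_eval_divX_numeratorPoly ht0, ← h]
    ring
  refine ⟨haxes, ?_⟩
  calc _ ≤ (X ^ (t - 2) + C (a * p.eval 0)).natDegree + p.natDegree := by
        refine card_filter_le_of_mem_axes _ (monic_X_pow_add_C _ (by omega)).ne_zero
          (divX_numeratorPoly_ne_zero ht0 htn) fun c b h => ?_
        rcases haxes c b h with rfl | rfl
        · left
          simpa [hHp, add_comm] using h
        · right
          simpa [hHp, ha, show t - 2 ≠ 0 by omega] using h
    _ ≤ (t - 2) + (t - 2) :=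
        add_le_add natDegree_X_pow_add_C.le (natDegree_divX_numeratorPoly_le ht0)
    _ = 2 * (t - 2) := by ring
end

section
/- Let t be a positive integer which is not a power of 2, with binary expansion t = 2^{a_1} + 2^{a_2} + ... + 2^{a_k} where k ≥ 2 and 0 ≤ a_1 < a_2 < ... < a_k. Then the polynomial (X+1)^t + X^t ∈ F_2[X] has degree e = 2^{a_2} + 2^{a_3} + ... + 2^{a_k} = t − 2^{a_1}, and e ≥ 2. -/
open Polynomial

/-! Write `t = 2 ^ m * s` with `s` odd, where `m = a₁`. In characteristic 2 the Frobenius gives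
`(X + 1) ^ t + X ^ t = ((X + 1) ^ s + X ^ s) ^ 2 ^ m`, and `(X + 1) ^ s + X ^ s` has leading term
`s X ^ (s - 1) = X ^ (s - 1)`, so the degree is `2 ^ m * (s - 1) = t - 2 ^ m`. Since `t` is not a
power of 2, `s ≥ 3`. -/

theorem coeff_X_add_one_pow_sub_X_pow {R : Type*} [CommRing R] (s i : ℕ) :
    ((X + 1) ^ s - X ^ s : R[X]).coeff i = s.choose i - if i = s then 1 else 0 := by
  rw [coeff_sub, coeff_X_add_one_pow, coeff_X_pow]

theorem coeff_X_add_one_pow_sub_X_pow_pred {R : Type*} [CommRing R] {s : ℕ} (hs : s ≠ 0) :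
    ((X + 1) ^ s - X ^ s : R[X]).coeff (s - 1) = s := by
  rw [coeff_X_add_one_pow_sub_X_pow, if_neg (by omega), sub_zero, Nat.choose_symm (by omega),
    Nat.choose_one_right]

theorem natDegree_X_add_one_pow_sub_X_pow {R : Type*} [CommRing R] {s : ℕ} (hs : (s : R) ≠ 0) :
    ((X + 1) ^ s - X ^ s : R[X]).natDegree = s - 1 := by
  have hs0 : s ≠ 0 := by rintro rfl; exact hs Nat.cast_zero
  refine natDegree_eq_of_le_of_coeff_ne_zero ?_ (by rwa [coeff_X_add_one_pow_sub_X_pow_pred hs0])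
  refine natDegree_le_iff_coeff_eq_zero.mpr fun i hi => ?_
  rw [coeff_X_add_one_pow_sub_X_pow]
  rcases Nat.lt_or_ge s i with hlt | hge
  · rw [Nat.choose_eq_zero_of_lt hlt, if_neg hlt.ne', Nat.cast_zero, sub_zero]
  · rw [show i = s by omega, Nat.choose_self, if_pos rfl, Nat.cast_one, sub_self]

theorem leadingCoeff_X_add_one_pow_sub_X_pow {R : Type*} [CommRing R] {s : ℕ} (hs : (s : R) ≠ 0) :
    ((X + 1) ^ s - X ^ s : R[X]).leadingCoeff = s := by
  have hs0 : s ≠ 0 := by rintro rfl; exact hs Nat.cast_zero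
  rw [leadingCoeff, natDegree_X_add_one_pow_sub_X_pow hs, coeff_X_add_one_pow_sub_X_pow_pred hs0]

theorem natDegree_X_add_one_pow_add_X_pow_of_odd {R : Type*} [CommRing R] [Nontrivial R]
    [CharP R 2] (m : ℕ) {s : ℕ} (hs : Odd s) :
    ((X + 1) ^ (2 ^ m * s) + X ^ (2 ^ m * s) : R[X]).natDegree = 2 ^ m * (s - 1) := by
  have hs1 : (s : R) = 1 := by
    obtain ⟨c, rfl⟩ := hs
    simp [CharTwo.two_eq_zero]
  have hs0 : (s : R) ≠ 0 := hs1 ▸ one_ne_zero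
  have hmonic : ((X + 1) ^ s + X ^ s : R[X]).Monic := by
    rw [Monic, ← CharTwo.sub_eq_add, leadingCoeff_X_add_one_pow_sub_X_pow hs0, hs1]
  rw [mul_comm, pow_mul, pow_mul, ← add_pow_char_pow, hmonic.natDegree_pow, ← CharTwo.sub_eq_add,
    natDegree_X_add_one_pow_sub_X_pow hs0, mul_comm]

theorem sum_two_pow_eq_two_pow_mul_odd {n : ℕ} {a : Fin (n + 1) → ℕ} (ha : StrictMono a) :
    ∃ s, Odd s ∧ ∑ i, 2 ^ a i = 2 ^ a 0 * s := by
  have hlt (i : Fin n) : a 0 < a i.succ := ha i.succ_pos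
  refine ⟨1 + ∑ i : Fin n, 2 ^ (a i.succ - a 0), Even.one_add ?_, ?_⟩
  · exact even_iff_two_dvd.mpr <| Finset.dvd_sum fun i _ => dvd_pow_self 2 (by have := hlt i; omega)
  · rw [Fin.sum_univ_succ, mul_add, mul_one, Finset.mul_sum]
    congr 1
    refine Finset.sum_congr rfl fun i _ => ?_
    rw [← pow_add, Nat.add_sub_cancel' (hlt i).le]

theorem stmt_12 (t : ℕ) (htn : ¬ ∃ j : ℕ, t = 2 ^ j)
    (k : ℕ) (hk : 2 ≤ k) (a : Fin k → ℕ) (ha : StrictMono a)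
    (hta : t = ∑ i : Fin k, 2 ^ (a i)) :
    ((Polynomial.X + 1) ^ t + Polynomial.X ^ t : Polynomial (ZMod 2)).natDegree =
        t - 2 ^ (a ⟨0, by omega⟩) ∧
    2 ≤ t - 2 ^ (a ⟨0, by omega⟩) := by
  obtain ⟨n, rfl⟩ : ∃ n, k = n + 1 := ⟨k - 1, by omega⟩
  obtain ⟨s, hs, hsum⟩ := sum_two_pow_eq_two_pow_mul_odd ha
  have hs3 : 3 ≤ s := by
    have : s ≠ 1 := fun h => htn ⟨a 0, by rw [hta, hsum, h, mul_one]⟩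
    obtain ⟨c, rfl⟩ := hs
    omega
  have hsub : t - 2 ^ a 0 = 2 ^ a 0 * (s - 1) := by rw [hta, hsum, Nat.mul_sub_one]
  change _ = t - 2 ^ a 0 ∧ 2 ≤ t - 2 ^ a 0
  rw [hsub, hta, hsum, natDegree_X_add_one_pow_add_X_pow_of_odd _ hs]
  exact ⟨rfl, le_mul_of_one_le_of_le Nat.one_le_two_pow (by omega)⟩
end

section
/- Let q = 2^r, let t ≥ 3 be an integer which is not a power of 2, and let a be a nonzero element of F_q. Suppose the function c ↦ a·c^t is planar on F_q. Let H̄(X,Y) = ((X+1)^t + X^t + (Y+1)^t + Y^t)/(X+Y) ∈ F_q[X,Y]. Then for every d of the form d = a^{−1}·b^{2−t} with b a nonzero element of F_q and with d ∉ {0, 1}, the number of zeros of H̄(X,Y) + d in F_q × F_q is at most t − 2. -/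
open Polynomial

section DifferenceQuotient

variable {R : Type*} [CommRing R] {H : MvPolynomial (Fin 2) R} {p : R[X]}

theorem MvPolynomial.eval_aeval_X {σ : Type*} (p : R[X]) (i : σ) (v : σ → R) :
    eval v (Polynomial.aeval (X i) p) = p.eval (v i) := by
  simpa using (aeval_algHom_apply (aeval (R := R) v) (X i) p).symm

theorem sub_mul_eval_eq_eval_sub_eval
    (hH : (MvPolynomial.X 0 - MvPolynomial.X 1) * H =
      aeval (MvPolynomial.X 0) p - aeval (MvPolynomial.X 1) p) (x y : R) :
    (x - y) * MvPolynomial.eval ![x, y] H = p.eval x - p.eval y := by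
  simpa [MvPolynomial.eval_aeval_X] using congrArg (MvPolynomial.eval ![x, y]) hH

theorem eval_diag_eq_eval_derivative
    (hH : (MvPolynomial.X 0 - MvPolynomial.X 1) * H =
      aeval (MvPolynomial.X 0) p - aeval (MvPolynomial.X 1) p) (x : R) :
    MvPolynomial.eval ![x, x] H = p.derivative.eval x := by
  set φ : MvPolynomial (Fin 2) R →ₐ[R] R[X] := MvPolynomial.aeval ![X + C x, C x]
  have hφ : X * φ H = taylor x p - C (p.eval x) := by
    simpa [φ, ← aeval_algHom_apply, ← comp_eq_aeval, ← taylor_apply] using congrArg φ hH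
  have hφ_zero : (φ H).eval 0 = MvPolynomial.eval ![x, x] H := by
    rw [← coe_aeval_eq_eval, ← AlgHom.comp_apply, MvPolynomial.comp_aeval]
    have hpoint : (fun i => aeval 0 (![X + C x, C x] i)) = ![x, x] := by
      funext i
      fin_cases i <;> simp
    rw [hpoint]
    rfl
  simpa [coeff_zero_eq_eval_zero, hφ_zero] using congrArg (coeff · 1) hφ

theorem eq_of_eval_eq_of_injective
    (hH : (MvPolynomial.X 0 - MvPolynomial.X 1) * H =
      aeval (MvPolynomial.X 0) p - aeval (MvPolynomial.X 1) p) {c : R}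
    (hinj : Function.Injective fun u => p.eval u - c * u)
    {x y : R} (hxy : MvPolynomial.eval ![x, y] H = c) : x = y := by
  have := sub_mul_eval_eq_eval_sub_eval hH x y
  rw [hxy] at this
  exact hinj (by linear_combination -this)

end DifferenceQuotient

theorem card_zeros_add_C_le_natDegree {F : Type*} [Field F] [Fintype F] [DecidableEq F]
    {H : MvPolynomial (Fin 2) F} {p : F[X]} {d : F}
    (hH : (MvPolynomial.X 0 - MvPolynomial.X 1) * H =
      aeval (MvPolynomial.X 0) p - aeval (MvPolynomial.X 1) p)
    (hinj : Function.Injective fun u => p.eval u + d * u) (hne : derivative p + C d ≠ 0) :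
    (Finset.univ.filter fun xy : F × F =>
      MvPolynomial.eval ![xy.1, xy.2] (H + MvPolynomial.C d) = 0).card ≤
        (derivative p + C d).natDegree := by
  set Q := derivative p + C d
  have hzeros : (Finset.univ.filter fun xy : F × F =>
      MvPolynomial.eval ![xy.1, xy.2] (H + MvPolynomial.C d) = 0) ⊆
        Q.roots.toFinset.image fun x => (x, x) := by
    rintro ⟨x, y⟩ hxy
    have hval : MvPolynomial.eval ![x, y] H = -d := by
      simpa [eq_neg_iff_add_eq_zero] using hxy
    obtain rfl : x = y := eq_of_eval_eq_of_injective hH (by simpa using hinj) hval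
    refine Finset.mem_image.2 ⟨x, ?_, rfl⟩
    rw [Multiset.mem_toFinset, mem_roots hne, IsRoot, eval_add, eval_C,
      ← eval_diag_eq_eval_derivative hH, hval, neg_add_cancel]
  calc _ ≤ (Q.roots.toFinset.image fun x => (x, x)).card := Finset.card_le_card hzeros
    _ ≤ Q.roots.toFinset.card := Finset.card_image_le
    _ ≤ Q.roots.card := Multiset.toFinset_card_le _
    _ ≤ Q.natDegree := card_roots' Q

theorem IsPlanar.injective_add_one_pow_add_pow_add_mul {F : Type*} [Field F] {a b : F} {t : ℕ}
    (h : IsPlanar fun c => a * c ^ t) (ha : a ≠ 0) (hb : b ≠ 0) :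
    Function.Injective fun u => (u + 1) ^ t + u ^ t + a⁻¹ * b ^ ((2 : ℤ) - t) * u := by
  have hrescale : (fun u => (u + 1) ^ t + u ^ t + a⁻¹ * b ^ ((2 : ℤ) - t) * u) =
      fun u => (a * b ^ t)⁻¹ * (a * (b * u + b) ^ t + a * (b * u) ^ t + b * (b * u)) := by
    funext u
    rw [zpow_sub₀ hb, zpow_natCast, zpow_ofNat, show b * u + b = b * (u + 1) by ring, mul_pow,
      mul_pow]
    field_simp
  rw [hrescale]
  exact (mul_right_injective₀ (by simp [ha, hb])).comp
    ((h b hb).injective.comp (mul_right_injective₀ hb))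

theorem natDegree_X_add_one_pow_add_X_pow_le {R : Type*} [CommRing R] [CharP R 2] (n : ℕ) :
    ((X + 1 : R[X]) ^ n + X ^ n).natDegree ≤ n - 1 := by
  rw [natDegree_le_iff_coeff_eq_zero]
  intro m hm
  rw [coeff_add, coeff_X_add_one_pow, coeff_X_pow]
  rcases (show n ≤ m by omega).eq_or_lt with rfl | hlt
  · simp [CharTwo.add_self_eq_zero]
  · simp [Nat.choose_eq_zero_of_lt hlt, hlt.ne']

theorem stmt_14_general (r : ℕ) (F : Type*) [Field F] [Fintype F] [DecidableEq F]
    (hcard : Fintype.card F = 2 ^ r) (t : ℕ) (ht : 3 ≤ t)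
    (a : F) (ha : a ≠ 0)
    (hplanar : IsPlanar (fun c : F => a * c ^ t))
    (Hbar : MvPolynomial (Fin 2) F)
    (hHbar : (MvPolynomial.X 0 + MvPolynomial.X 1) * Hbar =
        (MvPolynomial.X 0 + 1) ^ t + (MvPolynomial.X 0) ^ t +
        (MvPolynomial.X 1 + 1) ^ t + (MvPolynomial.X 1) ^ t) :
    ∀ b : F, b ≠ 0 → ∀ d : F, d = a⁻¹ * b ^ ((2 : ℤ) - t) → d ≠ 0 → d ≠ 1 →
      (Finset.univ.filter
          (fun xy : F × F =>
            MvPolynomial.eval ![xy.1, xy.2] (Hbar + MvPolynomial.C d) = 0)).card ≤ t - 2 := by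
  intro b hb d hd hd0 hd1
  have : CharP F 2 := charP_of_card_eq_prime_pow hcard
  set p : F[X] := (X + 1) ^ t + X ^ t
  have hH : (MvPolynomial.X 0 - MvPolynomial.X 1) * Hbar =
      aeval (MvPolynomial.X 0) p - aeval (MvPolynomial.X 1) p := by
    simp only [p, CharTwo.sub_eq_add, hHbar, map_add, map_pow, aeval_X, map_one]
    ring
  have hinj : Function.Injective fun u => p.eval u + d * u := by
    simpa [p, hd] using hplanar.injective_add_one_pow_add_pow_add_mul ha hb
  have hne : derivative p + C d ≠ 0 := by
    intro h0
    have heval : ((t % 2 : ℕ) : F) + d = 0 := by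
      simpa [p, derivative_pow, zero_pow (show t - 1 ≠ 0 by omega), ← CharP.cast_eq_mod]
        using congrArg (eval 0) h0
    rcases Nat.mod_two_eq_zero_or_one t with h | h <;> simp [h, CharTwo.add_eq_zero] at heval
    exacts [hd0 heval, hd1 heval.symm]
  calc _ ≤ (derivative p + C d).natDegree := card_zeros_add_C_le_natDegree hH hinj hne
    _ ≤ p.natDegree - 1 := natDegree_add_C.trans_le (natDegree_derivative_le p)
    _ ≤ t - 2 := by
      have : p.natDegree ≤ t - 1 := natDegree_X_add_one_pow_add_X_pow_le t
      omega

theorem stmt_14 (r : ℕ) (F : Type*) [Field F] [Fintype F] [DecidableEq F]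
    (hcard : Fintype.card F = 2 ^ r) (t : ℕ) (ht : 3 ≤ t)
    (htn : ¬ ∃ k : ℕ, t = 2 ^ k) (a : F) (ha : a ≠ 0)
    (hplanar : IsPlanar (fun c : F => a * c ^ t))
    (Hbar : MvPolynomial (Fin 2) F)
    (hHbar : (MvPolynomial.X 0 + MvPolynomial.X 1) * Hbar =
        (MvPolynomial.X 0 + 1) ^ t + (MvPolynomial.X 0) ^ t +
        (MvPolynomial.X 1 + 1) ^ t + (MvPolynomial.X 1) ^ t) :
    ∀ b : F, b ≠ 0 → ∀ d : F, d = a⁻¹ * b ^ ((2 : ℤ) - t) → d ≠ 0 → d ≠ 1 →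
      (Finset.univ.filter
          (fun xy : F × F =>
            MvPolynomial.eval ![xy.1, xy.2] (Hbar + MvPolynomial.C d) = 0)).card ≤ t - 2 :=
  stmt_14_general r F hcard t ht a ha hplanar Hbar hHbar
end

section
/- Let q = 2^r, let t be a positive integer, let a be a nonzero element of F_q, and suppose the function c ↦ a·c^t is planar on F_q. For d = a^{−1}·b^{2−t} with b a nonzero element of F_q, set f_d(X) = (X+1)^t + X^t + d·X ∈ F_q[X]. Then every pair (x,y) ∈ F_q × F_q with f_d(x) + f_d(y) = 0 satisfies x = y. -/
theorem IsPlanar.eq_of_add_eq_zero {F : Type*} [Field F] [CharP F 2] {f : F → F}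
    (hf : IsPlanar f) {b : F} (hb : b ≠ 0) {u v : F}
    (h : (f (u + b) + f u + b * u) + (f (v + b) + f v + b * v) = 0) : u = v :=
  (hf b hb).injective (CharTwo.add_eq_zero.mp h)

theorem mul_pow_mul_inv_mul_zpow_two_sub {F : Type*} [Field F] {a b : F} (ha : a ≠ 0)
    (hb : b ≠ 0) (t : ℕ) : a * b ^ t * (a⁻¹ * b ^ ((2 : ℤ) - t)) = b ^ 2 := by
  rw [zpow_sub₀ hb, zpow_ofNat, zpow_natCast]
  field_simp

theorem mul_pow_mul_add_pow_add_mul_eq {R : Type*} [CommRing R] {a b d : R} {t : ℕ}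
    (h : a * b ^ t * d = b ^ 2) (z : R) :
    a * b ^ t * ((z + 1) ^ t + z ^ t + d * z) =
      a * (b * z + b) ^ t + a * (b * z) ^ t + b * (b * z) := by
  rw [show b * z + b = b * (z + 1) by ring, mul_pow, mul_pow]
  linear_combination z * h

theorem stmt_15_general (r : ℕ) (F : Type*) [Field F] [Fintype F]
    (hcard : Fintype.card F = 2 ^ r) (t : ℕ)
    (a : F) (ha : a ≠ 0) (hplanar : IsPlanar (fun c : F => a * c ^ t))
    (b : F) (hb : b ≠ 0) (d : F) (hd : d = a⁻¹ * b ^ ((2 : ℤ) - t)) :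
    ∀ x y : F, ((x + 1) ^ t + x ^ t + d * x) + ((y + 1) ^ t + y ^ t + d * y) = 0 → x = y := by
  intro x y hxy
  have : CharP F 2 := charP_of_card_eq_prime_pow hcard
  have hscale := mul_pow_mul_add_pow_add_mul_eq (hd ▸ mul_pow_mul_inv_mul_zpow_two_sub ha hb t)
  refine mul_left_cancel₀ hb (hplanar.eq_of_add_eq_zero hb ?_)
  rw [← hscale, ← hscale, ← mul_add, hxy, mul_zero]

theorem stmt_15 (r : ℕ) (F : Type*) [Field F] [Fintype F]
    (hcard : Fintype.card F = 2 ^ r) (t : ℕ) (ht : 0 < t)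
    (a : F) (ha : a ≠ 0) (hplanar : IsPlanar (fun c : F => a * c ^ t))
    (b : F) (hb : b ≠ 0) (d : F) (hd : d = a⁻¹ * b ^ ((2 : ℤ) - t)) :
    ∀ x y : F, ((x + 1) ^ t + x ^ t + d * x) + ((y + 1) ^ t + y ^ t + d * y) = 0 → x = y :=
  stmt_15_general r F hcard t a ha hplanar b hb d hd
end
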